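/- arXiv:2307.00373 — 4 statements merged into one kernel-verified Lean document; each statement's English description precedes it below -/
import Mathlib

section
/- Let S ⊂ R^d be compact with volume function V(r) = μ(B(S,r)). If A ⊆ S is finite with empirical volume V_n(r) = μ(B(A,r)), then for s ≥ 2·d_H(S,A) one has 0 ≤ V(s) - V_n(s) ≤ V(s) - V(s - max_{p ∈ ∂S} d(p,A)). -/
/-!
A point of `S` lies within `d_H(S, A) ≤ s` of `A`. A point `x ∉ S` at distance at most `s - ε`
from `S` has a nearest point `y` of `S` on `∂S`, and `y` lies within `ε = max_{∂S} d(·, A)` of `A`,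
so `x` lies within `s` of `A`. Hence `B(S, s - ε) ⊆ B(A, s) ⊆ B(S, s)`, and the bounds follow by
monotonicity of the measure.
-/

open Metric Set MeasureTheory

namespace Metric

section PseudoMetric

variable {α : Type*} [PseudoMetricSpace α] {δ : ℝ} {E : Set α} {x : α}

theorem mem_cthickening_of_infDist_le (hE : E.Nonempty) (h : infDist x E ≤ δ) :
    x ∈ cthickening δ E := by
  rw [mem_cthickening_iff, ← ENNReal.ofReal_toReal (infEDist_ne_top hE)]
  exact ENNReal.ofReal_le_ofReal h

theorem infDist_le_of_mem_cthickening (hδ : 0 ≤ δ) (h : x ∈ cthickening δ E) :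
    infDist x E ≤ δ :=
  (ENNReal.toReal_mono ENNReal.ofReal_ne_top h).trans_eq (ENNReal.toReal_ofReal hδ)

theorem subset_cthickening_of_hausdorffDist_le {S A : Set α} {r : ℝ} (hA : A.Nonempty)
    (hfin : hausdorffEDist S A ≠ ⊤) (h : hausdorffDist S A ≤ r) : S ⊆ cthickening r A :=
  fun _ hx => mem_cthickening_of_infDist_le hA ((infDist_le_hausdorffDist_of_mem hx hfin).trans h)

theorem infDist_le_iSup_infDist_frontier [T2Space α] {S : Set α} (hS : IsCompact S) (A : Set α)
    {p : α} (hp : p ∈ frontier S) : infDist p A ≤ ⨆ q : frontier S, infDist (q : α) A := by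
  have : CompactSpace (frontier S) := isCompact_iff_compactSpace.1 <|
    hS.of_isClosed_subset isClosed_frontier hS.isClosed.frontier_subset
  have hcont : Continuous fun q : frontier S => infDist (q : α) A :=
    (continuous_infDist_pt A).comp continuous_subtype_val
  exact le_ciSup (isCompact_range hcont).bddAbove (⟨p, hp⟩ : frontier S)

end PseudoMetric

theorem cthickening_sub_subset_cthickening_of_frontier {E : Type*} [NormedAddCommGroup E]
    [NormedSpace ℝ E] [FiniteDimensional ℝ E] {S A : Set E} {s ε : ℝ} (hS : IsClosed S)
    (hA : A.Nonempty) (hSA : S ⊆ cthickening s A) (hε : ∀ p ∈ frontier S, infDist p A ≤ ε) :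
    cthickening (s - ε) S ⊆ cthickening s A := by
  intro x hx
  by_cases hxS : x ∈ S
  · exact hSA hxS
  have hpos : 0 ≤ s - ε := by
    by_contra! hneg
    rw [cthickening_of_nonpos hneg.le, hS.closure_eq] at hx
    exact hxS hx
  have hSne : S.Nonempty := by
    rcases S.eq_empty_or_nonempty with rfl | hne
    · simp at hx
    · exact hne
  obtain ⟨y, hy, hxy⟩ :=
    exists_mem_frontier_infDist_compl_eq_dist (s := Sᶜ) hxS (compl_ne_univ.2 hSne)
  rw [compl_compl] at hxy
  rw [frontier_compl] at hy
  refine mem_cthickening_of_infDist_le hA ?_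
  calc infDist x A ≤ infDist y A + dist x y := infDist_le_infDist_add_dist
    _ ≤ ε + (s - ε) := add_le_add (hε y hy) (hxy ▸ infDist_le_of_mem_cthickening hpos hx)
    _ = s := by ring

end Metric

theorem stmt1_general {d : ℕ} (S A : Set (EuclideanSpace ℝ (Fin d)))
    (hS : IsCompact S) (hSne : S.Nonempty) (hAne : A.Nonempty)
    (hAS : A ⊆ S)
    (V Vn : ℝ → ℝ)
    (hV : ∀ r, V r = (volume (cthickening r S)).toReal)
    (hVn : ∀ r, Vn r = (volume (cthickening r A)).toReal)
    (s : ℝ) (hs : 2 * hausdorffDist S A ≤ s) :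
    0 ≤ V s - Vn s ∧
      V s - Vn s ≤
        V s - V (s - ⨆ p : frontier S, infDist (p : EuclideanSpace ℝ (Fin d)) A) := by
  have hfin : hausdorffEDist S A ≠ ⊤ := hausdorffEDist_ne_top_of_nonempty_of_bounded
    hSne hAne hS.isBounded (hS.isBounded.subset hAS)
  have hSA : S ⊆ cthickening s A := subset_cthickening_of_hausdorffDist_le hAne hfin
    (by linarith [hausdorffDist_nonneg (s := S) (t := A)])
  have hincl := cthickening_sub_subset_cthickening_of_frontier hS.isClosed hAne hSA
    fun _ hp => infDist_le_iSup_infDist_frontier hS A hp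
  have hAS' : cthickening s A ⊆ cthickening s S := cthickening_subset_of_subset s hAS
  have hfinS : volume (cthickening s S) ≠ ⊤ := hS.isBounded.cthickening.measure_lt_top.ne
  simp only [hV, hVn, ← measureReal_def]
  exact ⟨sub_nonneg.2 (measureReal_mono hAS' hfinS),
    sub_le_sub_left (measureReal_mono hincl (measure_ne_top_of_subset hAS' hfinS)) _⟩

theorem stmt1 {d : ℕ} (S A : Set (EuclideanSpace ℝ (Fin d)))
    (hS : IsCompact S) (hSne : S.Nonempty) (hA : A.Finite) (hAne : A.Nonempty)
    (hAS : A ⊆ S)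
    (V Vn : ℝ → ℝ)
    (hV : ∀ r, V r = (volume (cthickening r S)).toReal)
    (hVn : ∀ r, Vn r = (volume (cthickening r A)).toReal)
    (s : ℝ) (hs : 2 * hausdorffDist S A ≤ s) :
    0 ≤ V s - Vn s ∧
      V s - Vn s ≤
        V s - V (s - ⨆ p : frontier S, infDist (p : EuclideanSpace ℝ (Fin d)) A) :=
  stmt1_general S A hS hSne hAne hAS V Vn hV hVn s hs
end

section
/- Let S ⊂ R^d be compact with polynomial reach R, and suppose r_{i_0} < R < r_{i_0+1}. If V restricted to [r_{i_0}, r_{i_0+1}] equals a polynomial of degree at most ℓ ≥ d, then V is a polynomial of degree at most d on [0, r_{i_0+1}], contradicting the definition of R; hence V is not a polynomial of degree at most ℓ on [r_{i_0}, r_{i_0+1}]. -/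
/-!
If `V` agreed with a polynomial `q` on `[r, r']`, then `q` would coincide, on an interval of
positive length, with a polynomial of degree at most `d` describing `V` near `0`: for `r ≥ 0` one
describing `V` on some `[0, s]` with `r < s ≤ R`, for `r < 0` the constant `V 0`, since
`cthickening t S = closure S` for `t ≤ 0`. Two polynomials agreeing on infinitely many points are
equal, so `V` would be a polynomial of degree at most `d` on all of `[0, r']`, with `r' > R`.
-/

open Metric Set MeasureTheory Polynomial

theorem Polynomial.eq_of_eqOn_Icc {p q : ℝ[X]} {a b : ℝ} (hab : a < b)
    (h : ∀ t ∈ Icc a b, p.eval t = q.eval t) : p = q :=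
  eq_of_infinite_eval_eq p q ((Icc_infinite hab).mono h)

def IsPolyOnIcc (f : ℝ → ℝ) (n : ℕ) (a b : ℝ) : Prop :=
  ∃ p : ℝ[X], p.natDegree ≤ n ∧ ∀ t ∈ Icc a b, f t = p.eval t

namespace IsPolyOnIcc

variable {f : ℝ → ℝ} {n : ℕ} {a b : ℝ}

theorem mono {c e : ℝ} (h : IsPolyOnIcc f n a b) (hsub : Icc c e ⊆ Icc a b) :
    IsPolyOnIcc f n c e :=
  let ⟨p, hp, hfp⟩ := h
  ⟨p, hp, fun t ht => hfp t (hsub ht)⟩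

theorem extend {s r : ℝ} {q : ℝ[X]} (h : IsPolyOnIcc f n a s)
    (hq : ∀ t ∈ Icc r b, f t = q.eval t) (hoverlap : max a r < min s b) :
    IsPolyOnIcc f n a b := by
  obtain ⟨p, hp, hfp⟩ := h
  have hpq : p = q := eq_of_eqOn_Icc hoverlap fun t ht =>
    (hfp t ⟨(le_max_left _ _).trans ht.1, ht.2.trans (min_le_left _ _)⟩).symm.trans
      (hq t ⟨(le_max_right _ _).trans ht.1, ht.2.trans (min_le_right _ _)⟩)
  have hrs : r < s := (le_max_right a r).trans_lt (hoverlap.trans_le (min_le_left s b))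
  refine ⟨p, hp, fun t ht => ?_⟩
  rcases le_or_gt t s with hts | hst
  · exact hfp t ⟨ht.1, hts⟩
  · exact hpq ▸ hq t ⟨(hrs.trans hst).le, ht.2⟩

end IsPolyOnIcc

theorem stmt7_general {d : ℕ} (S : Set (EuclideanSpace ℝ (Fin d)))
    (V : ℝ → ℝ) (hV : ∀ r, V r = (volume (cthickening r S)).toReal)
    (R : ℝ)
    (hbdd : BddAbove {r : ℝ | 0 ≤ r ∧ ∃ p : Polynomial ℝ, p.natDegree ≤ d ∧
      ∀ t ∈ Set.Icc (0:ℝ) r, V t = p.eval t})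
    (hR : R = sSup {r : ℝ | 0 ≤ r ∧ ∃ p : Polynomial ℝ, p.natDegree ≤ d ∧
      ∀ t ∈ Set.Icc (0:ℝ) r, V t = p.eval t})
    (r r' : ℝ) (ℓ : ℕ) (hr : r < R) (hr' : R < r') :
    ¬ ∃ q : Polynomial ℝ, q.natDegree ≤ ℓ ∧ ∀ t ∈ Set.Icc r r', V t = q.eval t := by
  rintro ⟨q, -, hq⟩
  change R = sSup {r | 0 ≤ r ∧ IsPolyOnIcc V d 0 r} at hR
  have hconst : ∀ a b, b ≤ 0 → IsPolyOnIcc V d a b := fun a b hb =>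
    ⟨C (V 0), by simp, fun t ht => by
      rw [eval_C, hV, hV, cthickening_of_nonpos (ht.2.trans hb), cthickening_of_nonpos le_rfl]⟩
  have h0 : (0 : ℝ) ∈ {r | 0 ≤ r ∧ IsPolyOnIcc V d 0 r} := ⟨le_rfl, hconst 0 0 le_rfl⟩
  have hR0 : 0 ≤ R := hR ▸ le_csSup hbdd h0
  suffices hr'A : IsPolyOnIcc V d 0 r' from
    (hr'.trans_le (hR ▸ le_csSup hbdd ⟨hR0.trans hr'.le, hr'A⟩)).false
  rcases lt_or_ge r 0 with hr0 | hr0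
  · refine ((hconst r 0 le_rfl).extend hq ?_).mono (Icc_subset_Icc hr0.le le_rfl)
    rw [max_self, lt_min_iff]
    exact ⟨hr0, by linarith⟩
  · obtain ⟨s, ⟨hs0, hs⟩, hrs⟩ := exists_lt_of_lt_csSup ⟨0, h0⟩ (hR ▸ hr)
    have hsR : s ≤ R := hR ▸ le_csSup hbdd ⟨hs0, hs⟩
    refine hs.extend hq ?_
    rw [max_eq_right hr0, lt_min_iff]
    exact ⟨hrs, by linarith⟩

theorem stmt7 {d : ℕ} (S : Set (EuclideanSpace ℝ (Fin d))) (hS : IsCompact S)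
    (V : ℝ → ℝ) (hV : ∀ r, V r = (volume (cthickening r S)).toReal)
    (R : ℝ)
    (hbdd : BddAbove {r : ℝ | 0 ≤ r ∧ ∃ p : Polynomial ℝ, p.natDegree ≤ d ∧
      ∀ t ∈ Set.Icc (0:ℝ) r, V t = p.eval t})
    (hR : R = sSup {r : ℝ | 0 ≤ r ∧ ∃ p : Polynomial ℝ, p.natDegree ≤ d ∧
      ∀ t ∈ Set.Icc (0:ℝ) r, V t = p.eval t})
    (r r' : ℝ) (ℓ : ℕ) (hdl : d ≤ ℓ) (hr : r < R) (hr' : R < r') :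
    ¬ ∃ q : Polynomial ℝ, q.natDegree ≤ ℓ ∧ ∀ t ∈ Set.Icc r r', V t = q.eval t :=
  stmt7_general S V hV R hbdd hR r r' ℓ hr hr'
end

section
/- Let X_1, X_2, ... be iid with support a compact set S ⊂ R^d, distribution standard with respect to Lebesgue measure with constant δ, and L_0(∂S) < ∞. Then almost surely, limsup_{n→∞} (n/log n)^{1/d} · max_{p∈∂S} d(p, {X_1,...,X_n}) ≤ (2/(δ ω_d))^{1/d}. -/
/-!
Put `r_n = (log n / n)^(1/d)` and fix `(2/(δ ω_d))^(1/d) < c < C`. A volume argument covers the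
bounded set `∂S` by a net of mesh `(C - c) r_n` with `O(r_n^(-d)) = O(n / log n)` points. If every
net point has a sample within `c r_n`, then every boundary point has one within `C r_n`. By
standardness and independence, a fixed ball of radius `c r_n` is missed by all `n` samples with
probability at most `exp(-n δ ω_d (c r_n)^d) = n^(-δ ω_d c^d)`, so the union bound over the net
gives `O(n^(1 - δ ω_d c^d))`, which is summable because `δ ω_d c^d > 2`. Borel–Cantelli then bounds
the normalised covering radius by `C` eventually, almost surely, and letting `C` decrease to
`(2/(δ ω_d))^(1/d)` along the rationals bounds the `limsup`.
-/

open Metric Set MeasureTheory Filter Finset Module ProbabilityTheory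
open scoped NNReal ENNReal Topology

theorem Metric.IsSeparated.card_mul_pow_le {E : Type*} [NormedAddCommGroup E] [NormedSpace ℝ E]
    [FiniteDimensional ℝ E] {N : Finset E} {ε : ℝ≥0} {x : E} {M : ℝ} (hM : 0 ≤ M)
    (hsep : IsSeparated ε (N : Set E)) (hN : (N : Set E) ⊆ closedBall x M) :
    (#N : ℝ) * ε ^ finrank ℝ E ≤ (2 * M + ε) ^ finrank ℝ E := by
  borelize E
  set μ : Measure E := Measure.addHaar
  have hV₀ : μ (closedBall 0 1) ≠ 0 := (measure_closedBall_pos μ _ one_pos).ne'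
  have hV : μ (closedBall 0 1) ≠ ⊤ := measure_closedBall_lt_top.ne
  have hdisj : (N : Set E).PairwiseDisjoint (closedBall · (ε / 2)) := by
    intro a ha b hb hab
    have : (ε : ℝ) < dist a b := by
      have : (ε : ℝ≥0∞) < edist a b := hsep ha hb hab
      rwa [edist_nndist, ENNReal.coe_lt_coe, ← NNReal.coe_lt_coe, coe_nndist] at this
    exact closedBall_disjoint_closedBall (by linarith)
  have hunion : (⋃ t ∈ N, closedBall t (ε / 2)) ⊆ closedBall x (M + ε / 2) :=
    iUnion₂_subset fun t ht =>
      closedBall_subset_closedBall' (by linarith [mem_closedBall.1 (hN ht)])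
  have hvol : (#N : ℝ≥0∞) * ENNReal.ofReal ((ε / 2) ^ finrank ℝ E) * μ (closedBall 0 1)
      ≤ ENNReal.ofReal ((M + ε / 2) ^ finrank ℝ E) * μ (closedBall 0 1) := by
    calc (#N : ℝ≥0∞) * ENNReal.ofReal ((ε / 2) ^ finrank ℝ E) * μ (closedBall 0 1)
        = ∑ t ∈ N, μ (closedBall t (ε / 2)) := by
          simp [Measure.addHaar_closedBall' μ _ (by positivity : (0:ℝ) ≤ ε / 2), mul_assoc]
      _ = μ (⋃ t ∈ N, closedBall t (ε / 2)) :=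
          (measure_biUnion_finset hdisj fun t _ => measurableSet_closedBall).symm
      _ ≤ μ (closedBall x (M + ε / 2)) := measure_mono hunion
      _ = _ := Measure.addHaar_closedBall' μ _ (by positivity)
  have hreal : (#N : ℝ) * (ε / 2) ^ finrank ℝ E ≤ (M + ε / 2) ^ finrank ℝ E := by
    rwa [ENNReal.mul_le_mul_iff_left hV₀ hV, ← ENNReal.ofReal_natCast,
      ← ENNReal.ofReal_mul (by positivity), ENNReal.ofReal_le_ofReal_iff (by positivity)] at hvol
  calc (#N : ℝ) * ε ^ finrank ℝ E = 2 ^ finrank ℝ E * ((#N : ℝ) * (ε / 2) ^ finrank ℝ E) := by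
        rw [div_pow]; field_simp
    _ ≤ 2 ^ finrank ℝ E * (M + ε / 2) ^ finrank ℝ E := by gcongr
    _ = (2 * M + ε) ^ finrank ℝ E := by rw [← mul_pow]; ring

theorem exists_finset_isCover_card_mul_pow_le {E : Type*} [NormedAddCommGroup E]
    [NormedSpace ℝ E] [FiniteDimensional ℝ E] {K : Set E} {x : E} {M : ℝ} (hM : 0 ≤ M)
    (hK : K ⊆ closedBall x M) {ε : ℝ≥0} (hε : ε ≠ 0) :
    ∃ N : Finset E, ↑N ⊆ K ∧ IsCover ε K N ∧
      (#N : ℝ) * ε ^ finrank ℝ E ≤ (2 * M + ε) ^ finrank ℝ E := by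
  have hpack : packingNumber ε K ≠ ⊤ := by
    obtain ⟨C, -, hCfin, hC⟩ := exists_finite_isCover_of_totallyBounded (ε := ε / 2)
      (by simpa using hε) ((isCompact_closedBall x M).totallyBounded.subset hK)
    have hpack_le := (packingNumber_two_mul_le_externalCoveringNumber (ε / 2) K).trans
      hC.externalCoveringNumber_le_encard
    rw [mul_div_cancel₀ ε two_ne_zero] at hpack_le
    exact ne_top_of_le_ne_top hCfin.encard_lt_top.ne hpack_le
  have hfin : (maximalSeparatedSet ε K).Finite :=
    Set.encard_ne_top_iff.1 (encard_maximalSeparatedSet hpack ▸ hpack)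
  refine ⟨hfin.toFinset, by simpa using maximalSeparatedSet_subset,
    by simpa using isCover_maximalSeparatedSet hpack, ?_⟩
  exact IsSeparated.card_mul_pow_le hM (by simpa using isSeparated_maximalSeparatedSet)
    (by simpa using maximalSeparatedSet_subset.trans hK)

noncomputable def coveringRadius {α ι : Type*} [PseudoMetricSpace α] (K : Set α) (x : ι → α) : ℝ :=
  ⨆ p : K, infDist (p : α) (range x)

theorem coveringRadius_nonneg {α ι : Type*} [PseudoMetricSpace α] (K : Set α) (x : ι → α) :
    0 ≤ coveringRadius K x :=
  Real.iSup_nonneg fun _ => infDist_nonneg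

theorem coveringRadius_le_of_isCover {α ι : Type*} [PseudoMetricSpace α] {K N : Set α} {ε : ℝ≥0}
    {x : ι → α} {ρ : ℝ} (hN : IsCover ε K N) (hρ : 0 ≤ ρ) (hx : ∀ t ∈ N, ∃ i, dist t (x i) ≤ ρ) :
    coveringRadius K x ≤ ε + ρ := by
  refine Real.iSup_le (fun p => ?_) (by positivity)
  obtain ⟨t, ht, hpt⟩ := mem_iUnion₂.1 (hN.subset_iUnion_closedBall p.2)
  obtain ⟨i, hi⟩ := hx t ht
  calc infDist (p : α) (range x) ≤ dist (p : α) (x i) := infDist_le_dist_of_mem (mem_range_self i)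
    _ ≤ dist (p : α) t + dist t (x i) := dist_triangle _ _ _
    _ ≤ ε + ρ := add_le_add hpt hi

theorem ENNReal.one_sub_ofReal_le_ofReal_exp_neg {q : ℝ} (hq : 0 ≤ q) :
    1 - ENNReal.ofReal q ≤ ENNReal.ofReal (Real.exp (-q)) := by
  rw [← ENNReal.ofReal_one, ← ENNReal.ofReal_sub 1 hq]
  exact ENNReal.ofReal_le_ofReal (Real.one_sub_le_exp_neg q)

theorem ProbabilityTheory.iIndepFun.measure_biInter_preimage_compl_le {Ω α : Type*}
    [MeasurableSpace Ω] [MeasurableSpace α] {P : Measure Ω} [IsProbabilityMeasure P]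
    {X : ℕ → Ω → α} {μX : Measure α} (hindep : iIndepFun X P) (hmeas : ∀ i, Measurable (X i))
    (hid : ∀ i, P.map (X i) = μX) {B : Set α} (hB : MeasurableSet B) {q : ℝ} (hq : 0 ≤ q)
    (hqB : ENNReal.ofReal q ≤ μX B) (I : Finset ℕ) :
    P (⋂ i ∈ I, X i ⁻¹' Bᶜ) ≤ ENNReal.ofReal (Real.exp (-(#I * q))) := by
  have hmiss : ∀ i, P (X i ⁻¹' Bᶜ) = 1 - μX B := fun i => by
    rw [preimage_compl, prob_compl_eq_one_sub (hmeas i hB), ← hid i, Measure.map_apply (hmeas i) hB]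
  calc P (⋂ i ∈ I, X i ⁻¹' Bᶜ) = ∏ i ∈ I, P (X i ⁻¹' Bᶜ) :=
        hindep.meas_biInter fun i _ => ⟨Bᶜ, hB.compl, rfl⟩
    _ = (1 - μX B) ^ #I := by simp only [hmiss, prod_const]
    _ ≤ ENNReal.ofReal (Real.exp (-q)) ^ #I := by
        gcongr
        exact (tsub_le_tsub_left hqB 1).trans (ENNReal.one_sub_ofReal_le_ofReal_exp_neg hq)
    _ = ENNReal.ofReal (Real.exp (-(#I * q))) := by
        rw [← ENNReal.ofReal_pow (Real.exp_nonneg _), ← Real.exp_nat_mul, mul_neg]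

theorem MeasureTheory.ae_eventually_notMem_of_le_ofReal {Ω : Type*} [MeasurableSpace Ω]
    {μ : Measure Ω} [IsFiniteMeasure μ] {A : ℕ → Set Ω} {g : ℕ → ℝ} (hg0 : ∀ n, 0 ≤ g n)
    (hg : Summable g) (hA : ∀ᶠ n in atTop, μ (A n) ≤ ENNReal.ofReal (g n)) :
    ∀ᵐ ω ∂μ, ∀ᶠ n in atTop, ω ∉ A n := by
  have hsum : Summable fun n => μ.real (A n) := by
    refine hg.of_norm_bounded_eventually ?_
    rw [Nat.cofinite_eq_atTop]
    filter_upwards [hA] with n hn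
    rw [Real.norm_of_nonneg measureReal_nonneg]
    exact ENNReal.toReal_le_of_le_ofReal (hg0 n) hn
  refine ae_eventually_notMem ?_
  calc ∑' n, μ (A n) = ∑' n, ENNReal.ofReal (μ.real (A n)) :=
        tsum_congr fun n => (ofReal_measureReal (measure_ne_top μ _)).symm
    _ ≠ ⊤ := by
        rw [← ENNReal.ofReal_tsum_of_nonneg (fun _ => measureReal_nonneg) hsum]
        exact ENNReal.ofReal_ne_top

theorem natCast_pos_of_log_pos {n : ℕ} (hn : 0 < Real.log n) : (0 : ℝ) < n := by
  rcases n.eq_zero_or_pos with rfl | h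
  · simp at hn
  · exact_mod_cast h

theorem div_rpow_pow_mul_exp_le {d : ℕ} (hd : d ≠ 0) {n : ℕ} (hn : 1 ≤ Real.log n)
    {L κ β c : ℝ} (hL : 0 ≤ L) (hκ : 0 < κ) :
    L / (κ * (Real.log n / n) ^ ((1 : ℝ) / d)) ^ d *
        Real.exp (-(n * (β * (c * (Real.log n / n) ^ ((1 : ℝ) / d)) ^ d))) ≤
      L / κ ^ d * (n : ℝ) ^ (1 - β * c ^ d) := by
  have hn₀ := natCast_pos_of_log_pos (by linarith)
  have hu : ((Real.log n / n) ^ ((1 : ℝ) / d)) ^ d = Real.log n / n := by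
    rw [one_div, Real.rpow_inv_natCast_pow (by positivity) hd]
  have hexp : Real.exp (-(n * (β * (c ^ d * (Real.log n / n))))) = (n : ℝ) ^ (-(β * c ^ d)) := by
    rw [Real.rpow_def_of_pos hn₀]
    congr 1
    field_simp
  rw [mul_pow, mul_pow, hu, hexp, sub_eq_add_neg, Real.rpow_add hn₀, Real.rpow_one, ← mul_assoc]
  gcongr
  calc L / (κ ^ d * (Real.log n / n)) = L / κ ^ d * (n / Real.log n) := by
        field_simp
    _ ≤ L / κ ^ d * n := by gcongr; exact div_le_self hn₀.le hn

theorem tendsto_log_div_rpow_atTop {p : ℝ} (hp : 0 < p) :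
    Tendsto (fun n : ℕ => (Real.log n / n) ^ p) atTop (𝓝 0) := by
  have := (Real.isLittleO_log_id_atTop.tendsto_div_nhds_zero.comp
    tendsto_natCast_atTop_atTop).rpow_const (Or.inr hp.le)
  simpa [Function.comp_def, Real.zero_rpow hp.ne'] using this

theorem Real.div_rpow_mul_div_rpow {a b : ℝ} (ha : 0 < a) (hb : 0 < b) (p : ℝ) :
    (a / b) ^ p * (b / a) ^ p = 1 := by
  rw [← Real.mul_rpow (by positivity) (by positivity), div_mul_div_comm, mul_comm b,
    div_self (by positivity), Real.one_rpow]

theorem Filter.limsup_le_of_forall_rat_lt {f : ℕ → ℝ} {R : ℝ}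
    (hf : IsCoboundedUnder (· ≤ ·) atTop f) (h : ∀ q : ℚ, R < q → ∀ᶠ n in atTop, f n ≤ q) :
    limsup f atTop ≤ R :=
  le_of_forall_gt_imp_ge_of_dense fun C hC => by
    obtain ⟨q, hRq, hqC⟩ := exists_rat_btwn hC
    exact (limsup_le_of_le hf (h q hRq)).trans hqC.le

section Sampling

variable {E : Type*} [NormedAddCommGroup E] [NormedSpace ℝ E] [FiniteDimensional ℝ E]
  [MeasurableSpace E] [BorelSpace E] {Ω : Type*} [MeasurableSpace Ω] {P : Measure Ω}
  [IsProbabilityMeasure P] {X : ℕ → Ω → E} {μX : Measure E}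

theorem measure_lt_coveringRadius_le (hindep : iIndepFun X P) (hmeas : ∀ i, Measurable (X i))
    (hid : ∀ i, P.map (X i) = μX) {K : Set E} {x₀ : E} {M : ℝ} (hM : 0 ≤ M)
    (hK : K ⊆ closedBall x₀ M) {b lam : ℝ} (hb : 0 ≤ b)
    (hstd : ∀ x ∈ K, ∀ ε : ℝ, 0 < ε → ε ≤ lam →
      ENNReal.ofReal (b * ε ^ finrank ℝ E) ≤ μX (closedBall x ε))
    {c C r : ℝ} (hc : 0 < c) (hcC : c < C) (hr : 0 < r) (hcr : c * r ≤ lam)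
    (hCr : (C - c) * r ≤ 1) (n : ℕ) :
    P {ω | C * r < coveringRadius K fun i : Fin n => X i ω} ≤
      ENNReal.ofReal ((2 * M + 1) ^ finrank ℝ E / ((C - c) * r) ^ finrank ℝ E) *
        ENNReal.ofReal (Real.exp (-(n * (b * (c * r) ^ finrank ℝ E)))) := by
  have hε : 0 < (C - c) * r := mul_pos (sub_pos.2 hcC) hr
  obtain ⟨N, hNK, hNcov, hNcard⟩ :=
    exists_finset_isCover_card_mul_pow_le hM hK (ε := ⟨_, hε.le⟩) (NNReal.coe_ne_zero.1 hε.ne')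
  have hsub : {ω | C * r < coveringRadius K fun i : Fin n => X i ω} ⊆
      ⋃ t ∈ N, ⋂ i ∈ range n, X i ⁻¹' (closedBall t (c * r))ᶜ := by
    intro ω hω
    by_contra hhit
    simp only [mem_iUnion, mem_iInter, Set.mem_preimage, not_exists, not_forall, mem_compl_iff,
      not_not, Finset.mem_range] at hhit
    have hcover : (coveringRadius K fun i : Fin n => X i ω) ≤ (C - c) * r + c * r :=
      coveringRadius_le_of_isCover hNcov (by positivity) fun t ht => by
        obtain ⟨i, hi, hX⟩ := hhit t ht
        exact ⟨⟨i, hi⟩, by rwa [dist_comm, ← mem_closedBall]⟩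
    exact (show C * r < _ from hω).not_ge (by linarith)
  have hcard : (#N : ℝ≥0∞) ≤
      ENNReal.ofReal ((2 * M + 1) ^ finrank ℝ E / ((C - c) * r) ^ finrank ℝ E) := by
    rw [← ENNReal.ofReal_natCast]
    refine ENNReal.ofReal_le_ofReal ((le_div_iff₀ (by positivity)).2 (hNcard.trans ?_))
    gcongr
    exact hCr
  calc P {ω | C * r < coveringRadius K fun i : Fin n => X i ω}
      ≤ ∑ t ∈ N, P (⋂ i ∈ range n, X i ⁻¹' (closedBall t (c * r))ᶜ) :=
        (measure_mono hsub).trans (measure_biUnion_finset_le _ _)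
    _ ≤ ∑ _t ∈ N, ENNReal.ofReal (Real.exp (-(n * (b * (c * r) ^ finrank ℝ E)))) := by
        refine sum_le_sum fun t ht => ?_
        simpa using hindep.measure_biInter_preimage_compl_le hmeas hid measurableSet_closedBall
          (by positivity) (hstd t (hNK ht) _ (by positivity) hcr) (range n)
    _ ≤ _ := by
        rw [sum_const, nsmul_eq_mul]
        gcongr

theorem ae_eventually_rpow_mul_coveringRadius_le (hd : 0 < finrank ℝ E)
    (hindep : iIndepFun X P) (hmeas : ∀ i, Measurable (X i)) (hid : ∀ i, P.map (X i) = μX)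
    {K : Set E} (hK : Bornology.IsBounded K) {b lam : ℝ} (hb : 0 < b) (hlam : 0 < lam)
    (hstd : ∀ x ∈ K, ∀ ε : ℝ, 0 < ε → ε ≤ lam →
      ENNReal.ofReal (b * ε ^ finrank ℝ E) ≤ μX (closedBall x ε))
    {C : ℝ} (hC : (2 / b) ^ ((1 : ℝ) / finrank ℝ E) < C) :
    ∀ᵐ ω ∂P, ∀ᶠ n : ℕ in atTop, ((n : ℝ) / Real.log n) ^ ((1 : ℝ) / finrank ℝ E) *
      coveringRadius K (fun i : Fin n => X i ω) ≤ C := by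
  set d := finrank ℝ E
  obtain ⟨M, hM, hKM⟩ := hK.subset_closedBall_lt 0 0
  obtain ⟨c, hRc, hcC⟩ := exists_between hC
  have hc : 0 < c := (Real.rpow_pos_of_pos (by positivity) _).trans hRc
  have ha : 2 < b * c ^ d := by
    have := pow_lt_pow_left₀ hRc (by positivity) hd.ne'
    rwa [one_div, Real.rpow_inv_natCast_pow (by positivity) hd.ne', div_lt_iff₀' hb] at this
  set r : ℕ → ℝ := fun n => (Real.log n / n) ^ ((1 : ℝ) / d)
  have hr : Tendsto r atTop (𝓝 0) := tendsto_log_div_rpow_atTop (by positivity)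
  have hlog : ∀ᶠ n : ℕ in atTop, 1 ≤ Real.log n :=
    (Real.tendsto_log_atTop.comp tendsto_natCast_atTop_atTop).eventually_ge_atTop 1
  have hA : ∀ᶠ n : ℕ in atTop, P {ω | C * r n < coveringRadius K fun i : Fin n => X i ω} ≤
      ENNReal.ofReal ((2 * M + 1) ^ d / (C - c) ^ d * (n : ℝ) ^ (1 - b * c ^ d)) := by
    filter_upwards [hlog, hr.eventually_le_const (div_pos hlam hc),
      hr.eventually_le_const (one_div_pos.2 (sub_pos.2 hcC))] with n hn hrlam hr1
    have hrpos : 0 < r n :=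
      Real.rpow_pos_of_pos (div_pos (by linarith) (natCast_pos_of_log_pos (by linarith))) _
    refine (measure_lt_coveringRadius_le hindep hmeas hid hM.le hKM hb.le hstd hc hcC hrpos
      ((le_div_iff₀' hc).1 hrlam) ((le_div_iff₀' (sub_pos.2 hcC)).1 hr1) n).trans ?_
    rw [← ENNReal.ofReal_mul (by positivity)]
    exact ENNReal.ofReal_le_ofReal
      (div_rpow_pow_mul_exp_le hd.ne' hn (by positivity) (sub_pos.2 hcC))
  have hsum : Summable fun n : ℕ => (2 * M + 1) ^ d / (C - c) ^ d * (n : ℝ) ^ (1 - b * c ^ d) :=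
    (Real.summable_nat_rpow.2 (by linarith)).mul_left _
  filter_upwards [ae_eventually_notMem_of_le_ofReal (fun n => by positivity) hsum hA] with ω hω
  filter_upwards [hω, hlog] with n hn hlogn
  calc ((n : ℝ) / Real.log n) ^ ((1 : ℝ) / d) * coveringRadius K (fun i : Fin n => X i ω)
      ≤ ((n : ℝ) / Real.log n) ^ ((1 : ℝ) / d) * (C * r n) :=
        mul_le_mul_of_nonneg_left (not_lt.1 hn) (by positivity)
    _ = C := by
        rw [mul_left_comm, Real.div_rpow_mul_div_rpow (natCast_pos_of_log_pos (by linarith))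
          (by linarith), mul_one]

theorem ae_limsup_rpow_mul_coveringRadius_le (hd : 0 < finrank ℝ E)
    (hindep : iIndepFun X P) (hmeas : ∀ i, Measurable (X i)) (hid : ∀ i, P.map (X i) = μX)
    {K : Set E} (hK : Bornology.IsBounded K) {b lam : ℝ} (hb : 0 < b) (hlam : 0 < lam)
    (hstd : ∀ x ∈ K, ∀ ε : ℝ, 0 < ε → ε ≤ lam →
      ENNReal.ofReal (b * ε ^ finrank ℝ E) ≤ μX (closedBall x ε)) :
    ∀ᵐ ω ∂P, limsup (fun n : ℕ => ((n : ℝ) / Real.log n) ^ ((1 : ℝ) / finrank ℝ E) *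
      coveringRadius K (fun i : Fin n => X i ω)) atTop ≤ (2 / b) ^ ((1 : ℝ) / finrank ℝ E) := by
  have hrat : ∀ᵐ ω ∂P, ∀ q : ℚ, (2 / b) ^ ((1 : ℝ) / finrank ℝ E) < q →
      ∀ᶠ n : ℕ in atTop, ((n : ℝ) / Real.log n) ^ ((1 : ℝ) / finrank ℝ E) *
        coveringRadius K (fun i : Fin n => X i ω) ≤ q :=
    ae_all_iff.2 fun q => eventually_imp_distrib_left.2 fun hq =>
      ae_eventually_rpow_mul_coveringRadius_le hd hindep hmeas hid hK hb hlam hstd hq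
  filter_upwards [hrat] with ω hω
  exact limsup_le_of_forall_rat_lt (isCoboundedUnder_le_of_le atTop fun n =>
    mul_nonneg (by positivity) (coveringRadius_nonneg _ _)) hω

end Sampling

theorem stmt13_general {d : ℕ} (hd : 1 ≤ d)
    {Ω : Type*} [MeasurableSpace Ω] (P : Measure Ω) [IsProbabilityMeasure P]
    (S : Set (EuclideanSpace ℝ (Fin d))) (hS : IsCompact S)
    (X : ℕ → Ω → EuclideanSpace ℝ (Fin d))
    (hmeas : ∀ i, Measurable (X i))
    (μX : Measure (EuclideanSpace ℝ (Fin d)))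
    (hid : ∀ i, Measure.map (X i) P = μX)
    (hindep : ProbabilityTheory.iIndepFun X P)
    (δ lam : ℝ) (hδ : 0 < δ) (hlam : 0 < lam)
    (hstd : ∀ x ∈ S, ∀ ε : ℝ, 0 < ε → ε ≤ lam →
      ENNReal.ofReal (δ * (volume (closedBall (0 : EuclideanSpace ℝ (Fin d)) 1)).toReal * ε ^ d)
        ≤ μX (closedBall x ε ∩ S)) :
    ∀ᵐ ω ∂P, Filter.limsup
        (fun n : ℕ => ((n : ℝ) / Real.log n) ^ ((1:ℝ) / d) *
          ⨆ p : frontier S,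
            infDist (p : EuclideanSpace ℝ (Fin d)) (Set.range fun i : Fin n => X i ω))
        Filter.atTop
      ≤ (2 / (δ * (volume (closedBall (0 : EuclideanSpace ℝ (Fin d)) 1)).toReal)) ^ ((1:ℝ) / d) := by
  have hfrontier : frontier S ⊆ S := hS.isClosed.frontier_subset
  have hvol : 0 < (volume (closedBall (0 : EuclideanSpace ℝ (Fin d)) 1)).toReal :=
    ENNReal.toReal_pos (measure_closedBall_pos volume _ one_pos).ne' measure_closedBall_lt_top.ne
  simpa only [finrank_euclideanSpace_fin, coveringRadius] using
    ae_limsup_rpow_mul_coveringRadius_le (by rwa [finrank_euclideanSpace_fin]) hindep hmeas hid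
      (hS.isBounded.subset hfrontier) (mul_pos hδ hvol) hlam fun x hx ε hε hεlam => by
        simpa only [finrank_euclideanSpace_fin] using
          (hstd x (hfrontier hx) ε hε hεlam).trans (measure_mono inter_subset_left)

theorem stmt13 {d : ℕ} (hd : 1 ≤ d)
    {Ω : Type*} [MeasurableSpace Ω] (P : Measure Ω) [IsProbabilityMeasure P]
    (S : Set (EuclideanSpace ℝ (Fin d))) (hS : IsCompact S)
    (X : ℕ → Ω → EuclideanSpace ℝ (Fin d))
    (hmeas : ∀ i, Measurable (X i))
    (μX : Measure (EuclideanSpace ℝ (Fin d)))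
    (hid : ∀ i, Measure.map (X i) P = μX)
    (hindep : ProbabilityTheory.iIndepFun X P)
    (hsupp : μX S = 1)
    (δ lam : ℝ) (hδ : 0 < δ) (hlam : 0 < lam)
    (hstd : ∀ x ∈ S, ∀ ε : ℝ, 0 < ε → ε ≤ lam →
      ENNReal.ofReal (δ * (volume (closedBall (0 : EuclideanSpace ℝ (Fin d)) 1)).toReal * ε ^ d)
        ≤ μX (closedBall x ε ∩ S))
    (L0 : ℝ)
    (hL : Filter.Tendsto
      (fun ε : ℝ => (volume (cthickening ε (frontier S))).toReal / (2 * ε))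
      (nhdsWithin 0 (Set.Ioi 0)) (nhds L0)) :
    ∀ᵐ ω ∂P, Filter.limsup
        (fun n : ℕ => ((n : ℝ) / Real.log n) ^ ((1:ℝ) / d) *
          ⨆ p : frontier S,
            infDist (p : EuclideanSpace ℝ (Fin d)) (Set.range fun i : Fin n => X i ω))
        Filter.atTop
      ≤ (2 / (δ * (volume (closedBall (0 : EuclideanSpace ℝ (Fin d)) 1)).toReal)) ^ ((1:ℝ) / d) :=
  stmt13_general hd P S hS X hmeas μX hid hindep δ lam hδ hlam hstd
end

section
/- The closed unit disk in R^2 with an open quadrant sector removed, S_P = {x ∈ R^2 : ‖x‖ ≤ 1} \ {(x,y) : x > 0, y > 0}, has volume function V(t) = 3π/4 + 2(1 + 3π/4)t + (5π/4 - 1)t^2 for all 0 ≤ t ≤ 1. -/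
/-!
For `0 ≤ t ≤ 1` the closed `t`-thickening of `S_P` is, up to null sets, the union of two pieces.
Outside the open quadrant it is the closed disk of radius `1 + t` minus that quadrant, because
radial projection onto the unit disk keeps a point outside the quadrant; its area is
`3π(1 + t)² / 4`. Inside the quadrant it consists of the points within `t` of the edges
`[0,1] × {0}` and `{0} × [0,1]`: the rectangles `[0,1] × [0,t]` and `[0,t] × [t,1]`, of areas `t`
and `t(1 - t)`, and the quarter disks of radius `t` at the corners `(1,0)` and `(0,1)`. Adding up
gives the formula. A quarter disk has a quarter of the area of the disk, by two reflections.
-/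

open Metric Set MeasureTheory

namespace NotchedDisk

lemma volume_fst_mem_or_snd_mem_eq_zero {C : Set ℝ} (hC : volume C = 0) :
    volume {q : ℝ × ℝ | q.1 ∈ C ∨ q.2 ∈ C} = 0 := by
  have h : {q : ℝ × ℝ | q.1 ∈ C ∨ q.2 ∈ C} = C ×ˢ univ ∪ univ ×ˢ C := by ext; simp
  rw [h, Measure.volume_eq_prod]
  exact measure_union_null (by simp [Measure.prod_prod, hC]) (by simp [Measure.prod_prod, hC])

lemma volume_axes : volume {q : ℝ × ℝ | q.1 = 0 ∨ q.2 = 0} = 0 :=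
  volume_fst_mem_or_snd_mem_eq_zero (C := {0}) (measure_singleton 0)

lemma sdiff_openQuadrant_inter_subset_axes {s u : Set (ℝ × ℝ)} (hu : u ⊆ Ici 0 ×ˢ Ici 0) :
    (s \ Ioi 0 ×ˢ Ioi 0) ∩ u ⊆ {q | q.1 = 0 ∨ q.2 = 0} := by
  rintro ⟨x, y⟩ ⟨⟨-, hO⟩, hq⟩
  obtain ⟨hx, hy⟩ := hu hq
  simp only [mem_prod, mem_Ioi, not_and_or, not_lt] at hO
  rcases hO with hx' | hy'
  · exact Or.inl (le_antisymm hx' hx)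
  · exact Or.inr (le_antisymm hy' hy)

lemma measure_union_preimage_eq_two_mul {α : Type*} [MeasurableSpace α] {μ : Measure α}
    {f : α → α} (hf : MeasurePreserving f μ μ) {s : Set α} (hs : MeasurableSet s)
    (hnull : μ (s ∩ f ⁻¹' s) = 0) : μ (s ∪ f ⁻¹' s) = 2 * μ s := by
  rw [measure_union₀ (hf.measurable hs).nullMeasurableSet hnull,
    hf.measure_preimage hs.nullMeasurableSet, two_mul]

lemma volume_Icc_prod_Icc {a b c d : ℝ} (hab : a ≤ b) :
    volume (Icc a b ×ˢ Icc c d) = ENNReal.ofReal ((b - a) * (d - c)) := by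
  rw [Measure.volume_eq_prod, Measure.prod_prod, Real.volume_Icc, Real.volume_Icc,
    ← ENNReal.ofReal_mul (sub_nonneg.2 hab)]

def disk (r : ℝ) : Set (ℝ × ℝ) := {q | q.1 ^ 2 + q.2 ^ 2 ≤ r ^ 2}

def quarterDisk (r : ℝ) : Set (ℝ × ℝ) := disk r ∩ Ici 0 ×ˢ Ici 0

def quarterDiskAt (c : ℝ × ℝ) (r : ℝ) : Set (ℝ × ℝ) := (· - c) ⁻¹' quarterDisk r

lemma measurableSet_disk (r : ℝ) : MeasurableSet (disk r) :=
  measurableSet_le (by fun_prop) (by fun_prop)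

lemma measurableSet_quarterDisk (r : ℝ) : MeasurableSet (quarterDisk r) :=
  (measurableSet_disk r).inter (measurableSet_Ici.prod measurableSet_Ici)

lemma measurableSet_quarterDiskAt (c : ℝ × ℝ) (r : ℝ) : MeasurableSet (quarterDiskAt c r) :=
  measurable_sub_const c (measurableSet_quarterDisk r)

lemma mem_quarterDiskAt_iff {a b x y r : ℝ} :
    (x, y) ∈ quarterDiskAt (a, b) r ↔ (x - a) ^ 2 + (y - b) ^ 2 ≤ r ^ 2 ∧ a ≤ x ∧ b ≤ y := by
  simp only [quarterDiskAt, quarterDisk, disk, mem_preimage, mem_inter_iff, mem_prod, mem_Ici,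
    Prod.mk_sub_mk, mem_ofPred_eq, sub_nonneg]

def upperHalfDisk (r : ℝ) : Set (ℝ × ℝ) := disk r ∩ univ ×ˢ Ici 0

lemma measurableSet_upperHalfDisk (r : ℝ) : MeasurableSet (upperHalfDisk r) :=
  (measurableSet_disk r).inter (MeasurableSet.univ.prod measurableSet_Ici)

lemma volume_disk_eq_two_mul (r : ℝ) : volume (disk r) = 2 * volume (upperHalfDisk r) := by
  have hσ : MeasurePreserving (Prod.map id Neg.neg : ℝ × ℝ → ℝ × ℝ) :=
    (MeasurePreserving.id volume).prod (Measure.measurePreserving_neg volume)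
  have hunion : upperHalfDisk r ∪ Prod.map id Neg.neg ⁻¹' upperHalfDisk r = disk r := by
    ext ⟨x, y⟩
    simp only [upperHalfDisk, disk, mem_union, mem_inter_iff, mem_preimage, Prod.map, mem_prod,
      mem_Ici, mem_ofPred_eq, mem_univ, true_and, id, neg_sq, neg_nonneg]
    constructor
    · rintro (⟨h, -⟩ | ⟨h, -⟩) <;> exact h
    · intro h
      rcases le_total 0 y with hy | hy <;> simp [h, hy]
  have hnull : volume (upperHalfDisk r ∩ Prod.map id Neg.neg ⁻¹' upperHalfDisk r) = 0 := by
    refine measure_mono_null ?_ volume_axes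
    rintro ⟨x, y⟩ ⟨⟨-, -, hy⟩, -, -, hy'⟩
    exact Or.inr (le_antisymm (neg_nonneg.1 hy') hy)
  rw [← hunion, measure_union_preimage_eq_two_mul hσ (measurableSet_upperHalfDisk r) hnull]

lemma volume_upperHalfDisk_eq_two_mul (r : ℝ) :
    volume (upperHalfDisk r) = 2 * volume (quarterDisk r) := by
  have hσ : MeasurePreserving (Prod.map Neg.neg id : ℝ × ℝ → ℝ × ℝ) :=
    (Measure.measurePreserving_neg volume).prod (MeasurePreserving.id volume)
  have hunion : quarterDisk r ∪ Prod.map Neg.neg id ⁻¹' quarterDisk r = upperHalfDisk r := by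
    ext ⟨x, y⟩
    simp only [upperHalfDisk, quarterDisk, disk, mem_union, mem_inter_iff, mem_preimage, Prod.map,
      mem_prod, mem_Ici, mem_ofPred_eq, mem_univ, true_and, id, neg_sq, neg_nonneg]
    constructor
    · rintro (⟨h, -, hy⟩ | ⟨h, -, hy⟩) <;> exact ⟨h, hy⟩
    · rintro ⟨h, hy⟩
      rcases le_total 0 x with hx | hx <;> simp [h, hx, hy]
  have hnull : volume (quarterDisk r ∩ Prod.map Neg.neg id ⁻¹' quarterDisk r) = 0 := by
    refine measure_mono_null ?_ volume_axes
    rintro ⟨x, y⟩ ⟨⟨-, hx, -⟩, -, hx', -⟩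
    exact Or.inl (le_antisymm (neg_nonneg.1 hx') hx)
  rw [← hunion, measure_union_preimage_eq_two_mul hσ (measurableSet_quarterDisk r) hnull]

local notation "ℝ²" => EuclideanSpace ℝ (Fin 2)

def toProd : ℝ² ≃ᵐ ℝ × ℝ :=
  (MeasurableEquiv.toLp 2 (Fin 2 → ℝ)).symm.trans MeasurableEquiv.finTwoArrow

lemma measurePreserving_toProd : MeasurePreserving toProd :=
  (volume_preserving_finTwoArrow ℝ).comp
    (EuclideanSpace.volume_preserving_symm_measurableEquiv_toLp (Fin 2))

lemma dist_le_iff_sq_le {p q : ℝ²} {c : ℝ} (hc : 0 ≤ c) :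
    dist p q ≤ c ↔ (p 0 - q 0) ^ 2 + (p 1 - q 1) ^ 2 ≤ c ^ 2 := by
  rw [← sq_le_sq₀ dist_nonneg hc, EuclideanSpace.dist_sq_eq, Fin.sum_univ_two, Real.dist_eq,
    Real.dist_eq, sq_abs, sq_abs]

lemma norm_le_iff_sq_le {p : ℝ²} {c : ℝ} (hc : 0 ≤ c) :
    ‖p‖ ≤ c ↔ p 0 ^ 2 + p 1 ^ 2 ≤ c ^ 2 := by
  simpa using dist_le_iff_sq_le (q := 0) hc

lemma preimage_toProd_disk {r : ℝ} (hr : 0 ≤ r) : toProd ⁻¹' disk r = closedBall 0 r := by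
  ext p
  rw [mem_closedBall_zero_iff, norm_le_iff_sq_le hr]
  rfl

lemma volume_disk {r : ℝ} (hr : 0 ≤ r) : volume (disk r) = ENNReal.ofReal (Real.pi * r ^ 2) := by
  rw [← measurePreserving_toProd.measure_preimage (measurableSet_disk r).nullMeasurableSet,
    preimage_toProd_disk hr, EuclideanSpace.volume_closedBall_fin_two, ← ENNReal.ofReal_pow hr,
    ← ENNReal.ofReal_mul (by positivity), mul_comm]

lemma volume_quarterDisk {r : ℝ} (hr : 0 ≤ r) :
    volume (quarterDisk r) = ENNReal.ofReal (Real.pi * r ^ 2 / 4) := by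
  have h := volume_disk_eq_two_mul r
  rw [volume_upperHalfDisk_eq_two_mul, ← mul_assoc, volume_disk hr, eq_comm,
    ← ENNReal.eq_div_iff (by norm_num) (by norm_num)] at h
  rw [h, ENNReal.ofReal_div_of_pos (by norm_num)]
  norm_num

lemma volume_quarterDiskAt (c : ℝ × ℝ) {r : ℝ} (hr : 0 ≤ r) :
    volume (quarterDiskAt c r) = ENNReal.ofReal (Real.pi * r ^ 2 / 4) := by
  simp_rw [quarterDiskAt, sub_eq_add_neg]
  rw [measure_preimage_add_right, volume_quarterDisk hr]

lemma volume_disk_sdiff_openQuadrant {r : ℝ} (hr : 0 ≤ r) :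
    volume (disk r \ Ioi 0 ×ˢ Ioi 0) = ENNReal.ofReal (3 * (Real.pi * r ^ 2) / 4) := by
  have hunion : (disk r \ Ioi 0 ×ˢ Ioi 0) ∪ quarterDisk r = disk r := by
    refine (union_subset sdiff_subset inter_subset_left).antisymm fun q hq => ?_
    by_cases hO : q ∈ Ioi 0 ×ˢ Ioi 0
    · exact Or.inr ⟨hq, Ioi_subset_Ici_self hO.1, Ioi_subset_Ici_self hO.2⟩
    · exact Or.inl ⟨hq, hO⟩
  have h := measure_union₀ (measurableSet_quarterDisk r).nullMeasurableSet
    (measure_mono_null (sdiff_openQuadrant_inter_subset_axes (s := disk r) inter_subset_right)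
      volume_axes)
  rw [hunion, volume_disk hr, volume_quarterDisk hr] at h
  rw [← ENNReal.add_left_inj ENNReal.ofReal_ne_top, ← h,
    ← ENNReal.ofReal_add (by positivity) (by positivity)]
  ring_nf

def notchFill (t : ℝ) : Set (ℝ × ℝ) :=
  Icc 0 1 ×ˢ Icc 0 t ∪ Icc 0 t ×ˢ Icc t 1 ∪ quarterDiskAt (1, 0) t ∪ quarterDiskAt (0, 1) t

lemma mem_notchFill_iff {t x y : ℝ} : (x, y) ∈ notchFill t ↔
    ((0 ≤ x ∧ x ≤ 1) ∧ 0 ≤ y ∧ y ≤ t ∨ (0 ≤ x ∧ x ≤ t) ∧ t ≤ y ∧ y ≤ 1) ∨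
      ((x - 1) ^ 2 + y ^ 2 ≤ t ^ 2 ∧ 1 ≤ x ∧ 0 ≤ y) ∨
      (x ^ 2 + (y - 1) ^ 2 ≤ t ^ 2 ∧ 0 ≤ x ∧ 1 ≤ y) := by
  simp only [notchFill, mem_union, mem_prod, mem_Icc, mem_quarterDiskAt_iff, sub_zero, or_assoc]

lemma notchFill_subset (t : ℝ) : notchFill t ⊆ Ici 0 ×ˢ Ici 0 := by
  rintro ⟨x, y⟩ h
  rw [mem_notchFill_iff] at h
  simp only [mem_prod, mem_Ici]
  rcases h with (⟨⟨hx, -⟩, hy, -⟩ | ⟨⟨hx, hxt⟩, hty, -⟩) | ⟨-, hx, hy⟩ | ⟨-, hx, hy⟩ <;>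
    constructor <;> linarith

lemma measurableSet_notchFill (t : ℝ) : MeasurableSet (notchFill t) :=
  (((measurableSet_Icc.prod measurableSet_Icc).union
    (measurableSet_Icc.prod measurableSet_Icc)).union (measurableSet_quarterDiskAt _ t)).union
    (measurableSet_quarterDiskAt _ t)

lemma volume_notchFill {t : ℝ} (ht0 : 0 ≤ t) (ht1 : t ≤ 1) :
    volume (notchFill t) =
      ENNReal.ofReal (t + t * (1 - t) + Real.pi * t ^ 2 / 4 + Real.pi * t ^ 2 / 4) := by
  set grid := {q : ℝ × ℝ | q.1 ∈ ({0, t, 1} : Set ℝ) ∨ q.2 ∈ ({0, t, 1} : Set ℝ)}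
  have hgrid : volume grid = 0 := volume_fst_mem_or_snd_mem_eq_zero ((toFinite _).measure_zero _)
  have h₁ : Icc 0 1 ×ˢ Icc 0 t ∩ Icc 0 t ×ˢ Icc t 1 ⊆ grid := by
    rintro ⟨x, y⟩ ⟨⟨-, -, hy⟩, -, hy', -⟩
    suffices y = t by simp [grid, this]
    exact le_antisymm hy hy'
  have h₂ : (Icc 0 1 ×ˢ Icc 0 t ∪ Icc 0 t ×ˢ Icc t 1) ∩ quarterDiskAt (1, 0) t ⊆ grid := by
    rintro ⟨x, y⟩ ⟨h, hC⟩
    simp only [mem_union, mem_prod, mem_Icc, mem_quarterDiskAt_iff] at h hC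
    suffices x = 1 by simp [grid, this]
    rcases h with ⟨⟨-, hx⟩, -⟩ | ⟨⟨-, hx⟩, -⟩ <;> linarith
  have h₃ : (Icc 0 1 ×ˢ Icc 0 t ∪ Icc 0 t ×ˢ Icc t 1 ∪ quarterDiskAt (1, 0) t) ∩
      quarterDiskAt (0, 1) t ⊆ grid := by
    rintro ⟨x, y⟩ ⟨h, hC⟩
    simp only [mem_union, mem_prod, mem_Icc, mem_quarterDiskAt_iff] at h hC
    suffices y = 1 by simp [grid, this]
    rcases h with (⟨-, -, hy⟩ | ⟨-, -, hy⟩) | ⟨hC', -, -⟩ <;> nlinarith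
  rw [notchFill, measure_union₀ (measurableSet_quarterDiskAt _ t).nullMeasurableSet
      (measure_mono_null h₃ hgrid),
    measure_union₀ (measurableSet_quarterDiskAt _ t).nullMeasurableSet (measure_mono_null h₂ hgrid),
    measure_union₀ (measurableSet_Icc.prod measurableSet_Icc).nullMeasurableSet
      (measure_mono_null h₁ hgrid),
    volume_Icc_prod_Icc zero_le_one, volume_Icc_prod_Icc ht0, volume_quarterDiskAt _ ht0,
    volume_quarterDiskAt _ ht0, sub_zero, sub_zero, one_mul,
    ← ENNReal.ofReal_add ht0 (by nlinarith), ← ENNReal.ofReal_add (by nlinarith) (by positivity),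
    ← ENNReal.ofReal_add (by nlinarith [Real.pi_pos]) (by positivity)]

def thickenedRegion (t : ℝ) : Set (ℝ × ℝ) := (disk (t + 1) \ Ioi 0 ×ˢ Ioi 0) ∪ notchFill t

lemma measurableSet_thickenedRegion (t : ℝ) : MeasurableSet (thickenedRegion t) :=
  ((measurableSet_disk _).diff (measurableSet_Ioi.prod measurableSet_Ioi)).union
    (measurableSet_notchFill t)

lemma volume_thickenedRegion {t : ℝ} (ht0 : 0 ≤ t) (ht1 : t ≤ 1) :
    volume (thickenedRegion t) = ENNReal.ofReal (3 * (Real.pi * (t + 1) ^ 2) / 4 +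
      (t + t * (1 - t) + Real.pi * t ^ 2 / 4 + Real.pi * t ^ 2 / 4)) := by
  rw [thickenedRegion, measure_union₀ (measurableSet_notchFill t).nullMeasurableSet
      (measure_mono_null (sdiff_openQuadrant_inter_subset_axes (notchFill_subset t)) volume_axes),
    volume_disk_sdiff_openQuadrant (by linarith), volume_notchFill ht0 ht1,
    ← ENNReal.ofReal_add (by positivity) (by nlinarith [Real.pi_pos])]

lemma lowerStrip_or_corner_of_near {x y a b t : ℝ} (ht : 0 ≤ t) (hy : 0 ≤ y) (ha : a ≤ 1)
    (hb : b ≤ 0) (hd : (x - a) ^ 2 + (y - b) ^ 2 ≤ t ^ 2) :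
    x ≤ 1 ∧ y ≤ t ∨ 1 ≤ x ∧ (x - 1) ^ 2 + y ^ 2 ≤ t ^ 2 := by
  have hy' : y ^ 2 ≤ (y - b) ^ 2 := by nlinarith
  rcases le_total x 1 with hx | hx
  · exact Or.inl ⟨hx, by nlinarith⟩
  · exact Or.inr ⟨hx, by nlinarith⟩

lemma mem_notchFill_of_near {t x y a b : ℝ} (ht0 : 0 ≤ t) (ht1 : t ≤ 1) (hx : 0 < x)
    (hy : 0 < y) (hab : a ^ 2 + b ^ 2 ≤ 1) (hsign : a ≤ 0 ∨ b ≤ 0)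
    (hd : (x - a) ^ 2 + (y - b) ^ 2 ≤ t ^ 2) : (x, y) ∈ notchFill t := by
  have ha : a ≤ 1 := by nlinarith
  have hb : b ≤ 1 := by nlinarith
  rw [mem_notchFill_iff]
  rcases hsign with ha0 | hb0
  · rcases lowerStrip_or_corner_of_near (x := y) (y := x) ht0 hx.le hb ha0 (by linarith) with
      ⟨hy1, hxt⟩ | ⟨hy1, hC⟩
    · rcases le_total y t with hyt | hyt
      · exact Or.inl (Or.inl ⟨⟨hx.le, by linarith⟩, hy.le, hyt⟩)
      · exact Or.inl (Or.inr ⟨⟨hx.le, hxt⟩, hyt, hy1⟩)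
    · exact Or.inr (Or.inr ⟨by linarith, hx.le, hy1⟩)
  · rcases lowerStrip_or_corner_of_near ht0 hy.le ha hb0 hd with ⟨hx1, hyt⟩ | ⟨hx1, hC⟩
    · exact Or.inl (Or.inl ⟨⟨hx.le, hx1⟩, hy.le, hyt⟩)
    · exact Or.inr (Or.inl ⟨hC, hx1, hy.le⟩)

lemma exists_near_of_mem_notchFill {t x y : ℝ} (h : (x, y) ∈ notchFill t) :
    ∃ a b : ℝ, (a ^ 2 + b ^ 2 ≤ 1 ∧ (a ≤ 0 ∨ b ≤ 0)) ∧ (x - a) ^ 2 + (y - b) ^ 2 ≤ t ^ 2 := by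
  rw [mem_notchFill_iff] at h
  rcases h with (⟨⟨hx0, hx1⟩, hy0, hyt⟩ | ⟨⟨hx0, hxt⟩, hty, hy1⟩) | ⟨hC, -, -⟩ | ⟨hC, -, -⟩
  · exact ⟨x, 0, ⟨by nlinarith, Or.inr le_rfl⟩, by nlinarith⟩
  · exact ⟨0, y, ⟨by nlinarith, Or.inl le_rfl⟩, by nlinarith⟩
  · exact ⟨1, 0, ⟨by norm_num, Or.inr le_rfl⟩, by simpa using hC⟩
  · exact ⟨0, 1, ⟨by norm_num, Or.inl le_rfl⟩, by simpa using hC⟩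

theorem closedBall_inter_subset_cthickening {E : Type*} [NormedAddCommGroup E]
    [NormedSpace ℝ E] {C : Set E} (hC : StarConvex ℝ 0 C) {r t : ℝ} (hr : 0 ≤ r) :
    closedBall 0 (t + r) ∩ C ⊆ cthickening t (closedBall 0 r ∩ C) := by
  rintro p ⟨hp, hpC⟩
  rw [mem_closedBall_zero_iff] at hp
  rcases le_or_gt ‖p‖ r with hpr | hpr
  · exact self_subset_cthickening _ ⟨mem_closedBall_zero_iff.2 hpr, hpC⟩
  have hp0 : 0 < ‖p‖ := hr.trans_lt hpr
  have hc : r / ‖p‖ ≤ 1 := div_le_one_of_le₀ hpr.le hp0.le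
  refine mem_cthickening_of_dist_le p ((r / ‖p‖) • p) t _
    ⟨?_, hC.smul_mem hpC (by positivity) hc⟩ ?_
  · rw [mem_closedBall_zero_iff, norm_smul, Real.norm_of_nonneg (by positivity),
      div_mul_cancel₀ _ hp0.ne']
  · calc dist p ((r / ‖p‖) • p) = ‖(1 - r / ‖p‖) • p‖ := by
          rw [dist_eq_norm, sub_smul, one_smul]
      _ = ‖p‖ - r := by
        rw [norm_smul, Real.norm_of_nonneg (sub_nonneg.2 hc), sub_mul, one_mul,
          div_mul_cancel₀ _ hp0.ne']
      _ ≤ t := by linarith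

def openQuadrant : Set ℝ² := {p | 0 < p 0 ∧ 0 < p 1}

def notchedDisk : Set ℝ² := closedBall 0 1 \ openQuadrant

lemma starConvex_compl_openQuadrant : StarConvex ℝ 0 openQuadrantᶜ := by
  intro p hp a b _ hb _ ⟨h0, h1⟩
  simp only [smul_zero, zero_add, PiLp.smul_apply, smul_eq_mul] at h0 h1
  exact hp ⟨pos_of_mul_pos_right h0 hb, pos_of_mul_pos_right h1 hb⟩

lemma isOpen_openQuadrant : IsOpen openQuadrant :=
  (isOpen_lt continuous_const (PiLp.continuous_apply 2 _ 0)).inter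
    (isOpen_lt continuous_const (PiLp.continuous_apply 2 _ 1))

lemma isCompact_notchedDisk : IsCompact notchedDisk :=
  (isCompact_closedBall 0 1).diff isOpen_openQuadrant

lemma mem_notchedDisk_iff {p : ℝ²} :
    p ∈ notchedDisk ↔ p 0 ^ 2 + p 1 ^ 2 ≤ 1 ∧ (p 0 ≤ 0 ∨ p 1 ≤ 0) := by
  rw [notchedDisk, mem_sdiff, mem_closedBall_zero_iff, norm_le_iff_sq_le zero_le_one, one_pow,
    openQuadrant, mem_ofPred_eq, not_and_or, not_lt, not_lt]

lemma mem_cthickening_notchedDisk_iff {t : ℝ} (ht : 0 ≤ t) {p : ℝ²} :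
    p ∈ cthickening t notchedDisk ↔ ∃ a b : ℝ, (a ^ 2 + b ^ 2 ≤ 1 ∧ (a ≤ 0 ∨ b ≤ 0)) ∧
      (p 0 - a) ^ 2 + (p 1 - b) ^ 2 ≤ t ^ 2 := by
  rw [isCompact_notchedDisk.cthickening_eq_biUnion_closedBall ht]
  simp only [mem_iUnion₂, mem_closedBall, exists_prop]
  constructor
  · rintro ⟨q, hq, hpq⟩
    exact ⟨q 0, q 1, mem_notchedDisk_iff.1 hq, (dist_le_iff_sq_le ht).1 hpq⟩
  · rintro ⟨a, b, hab, hpq⟩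
    exact ⟨!₂[a, b], mem_notchedDisk_iff.2 hab, (dist_le_iff_sq_le ht).2 hpq⟩

theorem cthickening_notchedDisk {t : ℝ} (ht0 : 0 ≤ t) (ht1 : t ≤ 1) :
    cthickening t notchedDisk = toProd ⁻¹' thickenedRegion t := by
  have hball : cthickening t notchedDisk ⊆ closedBall 0 (t + 1) :=
    (cthickening_subset_of_subset t sdiff_subset).trans
      (cthickening_closedBall ht0 zero_le_one (0 : ℝ²)).subset
  ext p
  have hdisk : toProd p ∈ disk (t + 1) ↔ p ∈ closedBall 0 (t + 1) := by
    rw [← preimage_toProd_disk (by linarith)]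
    rfl
  change _ ↔ (toProd p ∈ disk (t + 1) ∧ p ∉ openQuadrant) ∨ (p 0, p 1) ∈ notchFill t
  rw [hdisk]
  constructor
  · intro hp
    by_cases hpO : p ∈ openQuadrant
    · obtain ⟨a, b, hab, hd⟩ := (mem_cthickening_notchedDisk_iff ht0).1 hp
      exact Or.inr (mem_notchFill_of_near ht0 ht1 hpO.1 hpO.2 hab.1 hab.2 hd)
    · exact Or.inl ⟨hball hp, hpO⟩
  · rintro (hp | hp)
    · exact closedBall_inter_subset_cthickening starConvex_compl_openQuadrant zero_le_one hp
    · exact (mem_cthickening_notchedDisk_iff ht0).2 (exists_near_of_mem_notchFill hp)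

end NotchedDisk

open NotchedDisk in
theorem stmt16 :
    ∀ t ∈ Set.Icc (0:ℝ) 1,
      (volume (cthickening t
          ((closedBall (0 : EuclideanSpace ℝ (Fin 2)) 1) \
            {p : EuclideanSpace ℝ (Fin 2) | 0 < p 0 ∧ 0 < p 1}))).toReal
        = 3 * Real.pi / 4 + 2 * (1 + 3 * Real.pi / 4) * t + (5 * Real.pi / 4 - 1) * t ^ 2 := by
  rintro t ⟨ht0, ht1⟩
  change (volume (cthickening t notchedDisk)).toReal = _
  rw [cthickening_notchedDisk ht0 ht1, measurePreserving_toProd.measure_preimage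
    (measurableSet_thickenedRegion t).nullMeasurableSet, volume_thickenedRegion ht0 ht1,
    ENNReal.toReal_ofReal (by nlinarith [Real.pi_pos])]
  ring
end
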